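/- Let T be an SSYT of shape λ with content μ=(μ_1,…,μ_n), and let α=ε_i−ε_j (i<j) be a type A_{n−1} positive root. (1) If μ_i>μ_j, then f_α(T)≠0; in particular, if μ−α (obtained from μ by decreasing μ_i by 1 and increasing μ_j by 1) is a partition, then f_α(T)≠0. (2) If μ_i<μ_j, then e_α(T)≠0. -/

import Mathlib

attribute [local instance] Classical.propDecidable

namespace AtomicPaper

/-- Set the entry at cell `(r, c)` (0-indexed row and column) of the tableau `T` to `a`. -/
def setCell (T : List (List ℕ)) (rc : ℕ × ℕ) (a : ℕ) : List (List ℕ) :=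
  T.set rc.1 ((T.getD rc.1 []).set rc.2 a)

/-- The row word of `T` together with cell positions: rows are read
right to left, top to bottom; entries are pairs `(letter, (row, column))`. -/
def rowWordP (T : List (List ℕ)) : List (ℕ × (ℕ × ℕ)) :=
  ((T.zipIdx.map Prod.swap).map fun p => (((p.2.zipIdx.map Prod.swap).map fun q => (q.2, (p.1, q.1))).reverse)).flatten

/-- Bracketing scan for the letters `i`, `i+1` on a positioned word: returns the pair
`(positions of unmatched i+1's in left-to-right order,
  positions of unmatched i's with the rightmost one first)`,
where an `i` immediately matches a later `i+1` (recursive deletion of factors `i (i+1)`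
in the subword on the letters `i`, `i+1`). -/
def bracket (i : ℕ) (w : List (ℕ × (ℕ × ℕ))) : List (ℕ × ℕ) × List (ℕ × ℕ) :=
  w.foldl
    (fun (st : List (ℕ × ℕ) × List (ℕ × ℕ)) (p : ℕ × (ℕ × ℕ)) =>
      if p.1 = i then (st.1, p.2 :: st.2)
      else if p.1 = i + 1 then
        match st.2 with
        | [] => (st.1 ++ [p.2], [])
        | _ :: tail => (st.1, tail)
      else st)
    ([], [])

/-- The Kashiwara crystal operator `f̃_i`: changes the leftmost unmatched letter `i`
(i.e. the leftmost `i` of the reduced word `w_i^red`) into `i+1`; `none` if there is no such letter. -/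
def ftil (i : ℕ) (T : List (List ℕ)) : Option (List (List ℕ)) :=
  match (bracket i (rowWordP T)).2.getLast? with
  | none => none
  | some rc => some (setCell T rc (i + 1))

/-- The Kashiwara crystal operator `ẽ_i`: changes the rightmost unmatched letter `i+1`
(i.e. the rightmost `i+1` of the reduced word `w_i^red`) into `i`; `none` if there is no such letter. -/
def etil (i : ℕ) (T : List (List ℕ)) : Option (List (List ℕ)) :=
  match (bracket i (rowWordP T)).1.getLast? with
  | none => none
  | some rc => some (setCell T rc i)

/-- The crystal Weyl group action of the simple transposition `s_i`:
if `r > s` it changes the `r - s` rightmost unmatched letters `i+1` into `i`,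
and otherwise the `s - r` leftmost unmatched letters `i` into `i+1`. -/
def siAct (i : ℕ) (T : List (List ℕ)) : List (List ℕ) :=
  let st := bracket i (rowWordP T)
  if st.2.length < st.1.length then
    (st.1.drop st.2.length).foldl (fun U rc => setCell U rc i) T
  else
    (st.2.drop st.1.length).foldl (fun U rc => setCell U rc (i + 1)) T

/-- Apply the crystal actions of the listed simple transpositions, leftmost first. -/
def applyWord (l : List ℕ) (T : List (List ℕ)) : List (List ℕ) :=
  l.foldl (fun U i => siAct i U) T

/-- A reduced word (applied leftmost first) for the shortest permutation `w ∈ S_n` with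
`w(1) = i` and `w(2) = j` (for `i < j`), i.e. with `w(α_1) = ε_i - ε_j`:
`w = (s_{i-1} ⋯ s_1) ∘ (s_{j-1} ⋯ s_2)`. -/
def wWord (i j : ℕ) : List ℕ := List.range' 2 (j - 2) ++ List.range' 1 (i - 1)

/-- The modified crystal operator `f_α = w ∘ f̃_1 ∘ w⁻¹` for the positive root
`α = ε_i - ε_j` (`i < j`), where `w` is the shortest permutation with `w(α_1) = α`. -/
def fRoot (i j : ℕ) (T : List (List ℕ)) : Option (List (List ℕ)) :=
  (ftil 1 (applyWord (wWord i j).reverse T)).map (applyWord (wWord i j))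

/-- The modified crystal operator `e_α = w ∘ ẽ_1 ∘ w⁻¹` for the positive root
`α = ε_i - ε_j` (`i < j`). -/
def eRoot (i j : ℕ) (T : List (List ℕ)) : Option (List (List ℕ)) :=
  (etil 1 (applyWord (wWord i j).reverse T)).map (applyWord (wWord i j))

/-- `T` is a semistandard Young tableau with entries in `{1, …, n}`:
the rows (lists of entries, top row first) are nonempty and weakly increasing,
the row lengths are weakly decreasing (partition shape),
the columns are strictly increasing, and all entries lie in `{1, …, n}`. -/
def IsSSYT (n : ℕ) (T : List (List ℕ)) : Prop :=
  (∀ row ∈ T, row ≠ [] ∧ List.Chain' (· ≤ ·) row) ∧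
  List.Chain' (fun a b => b ≤ a) (T.map List.length) ∧
  (∀ r c, r + 1 < T.length → c < (T.getD (r + 1) []).length →
      (T.getD r []).getD c 0 < (T.getD (r + 1) []).getD c 0) ∧
  (∀ a ∈ T.flatten, 1 ≤ a ∧ a ≤ n)

/-- `contentOf T i` is the number of entries of `T` equal to `i` (letters are 1-based). -/
def contentOf (T : List (List ℕ)) : ℕ → ℕ := fun i => T.flatten.count i

/-- `mrow T k i` is the number of entries equal to `i` in row `k` of `T` (0-indexed rows;
row `k` here corresponds to row `k+1` of the paper). -/
def mrow (T : List (List ℕ)) (k i : ℕ) : ℕ := (T.getD k []).count i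

/-- Schensted insertion of `x` into a weakly increasing row; returns the new row and
the bumped entry, if any. -/
def insertRow (x : ℕ) : List ℕ → List ℕ × Option ℕ
  | [] => ([x], none)
  | a :: rest =>
    if a ≤ x then
      let p := insertRow x rest
      (a :: p.1, p.2)
    else (x :: rest, some a)

/-- Schensted row-insertion of `x` into the tableau `T`. -/
def insertTab : List (List ℕ) → ℕ → List (List ℕ)
  | [], x => [[x]]
  | row :: rest, x =>
    let p := insertRow x row
    match p.2 with
    | none => p.1 :: rest
    | some y => p.1 :: insertTab rest y

/-- The cyclage `C(T)`: remove the bottom-left (south-west) entry `x` of `T` and row-insert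
`x` into the remaining tableau. (For an empty tableau, or one with an empty last row,
this is the identity.) -/
def cyclage (T : List (List ℕ)) : List (List ℕ) :=
  match T.getLast? with
  | none => T
  | some [] => T
  | some (x :: rest) =>
    insertTab (T.dropLast ++ if rest = [] then [] else [rest]) x

/-- The cocharge of `T`: the number of cyclage steps needed to reach a one-row tableau. -/
noncomputable def cocharge (T : List (List ℕ)) : ℕ :=
  sInf {k | (cyclage^[k] T).length ≤ 1}

/-- The Lascoux–Schützenberger charge `c(T) = ‖μ‖ - co(T)`, where `μ` is the content of `T`
and `‖μ‖ = Σ_i (i-1) μ_i` (equivalently, the sum over all entries `a` of `T` of `a - 1`). -/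
noncomputable def chargeT (T : List (List ℕ)) : ℕ :=
  (T.flatten.sum - T.flatten.length) - cocharge T

/-- The sum `μ_1 + ⋯ + μ_j` of the first `j` parts (1-indexed). -/
def sumTo (μ : ℕ → ℕ) (j : ℕ) : ℕ := ∑ i ∈ Finset.Icc 1 j, μ i

/-- `μ` (1-indexed) is a partition with at most `n` parts. -/
def IsPartitionFun (n : ℕ) (μ : ℕ → ℕ) : Prop :=
  (∀ i j, 1 ≤ i → i ≤ j → μ j ≤ μ i) ∧ ∀ i, i = 0 ∨ n < i → μ i = 0

/-- Dominance order on partitions (of the same number) with at most `n` parts. -/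
def DomLE (n : ℕ) (ν μ : ℕ → ℕ) : Prop :=
  (∀ j, sumTo ν j ≤ sumTo μ j) ∧ sumTo ν n = sumTo μ n

def DomLT (n : ℕ) (ν μ : ℕ → ℕ) : Prop := DomLE n ν μ ∧ ∃ i, ν i ≠ μ i

/-- `ν` is covered by `μ` in the dominance order on partitions with at most `n` parts. -/
def DomCovers (n : ℕ) (μ ν : ℕ → ℕ) : Prop :=
  DomLT n ν μ ∧ ∀ κ, IsPartitionFun n κ → ¬(DomLT n ν κ ∧ DomLT n κ μ)

/-- `content(T) - α` for the positive root `α = ε_i - ε_j`. -/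
def contentMinus (T : List (List ℕ)) (i j : ℕ) : ℕ → ℕ := fun k =>
  if k = i then contentOf T i - 1
  else if k = j then contentOf T j + 1
  else contentOf T k

/-- A vertex of the modified crystal graph `𝔹(λ)⁺`: an SSYT of shape `λ` with entries in
`{1, …, n}` whose content is a partition. Here `λ` is given as the list of row lengths. -/
def IsVertex (n : ℕ) (lam : List ℕ) (T : List (List ℕ)) : Prop :=
  IsSSYT n T ∧ T.map List.length = lam ∧ IsPartitionFun n (contentOf T)

/-- The edges of the modified crystal graph `𝔹(λ)⁺`: `T ⇢ f_α(T)` for every positive root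
`α = ε_i - ε_j` such that `content(T) - α` is a partition covered by `content(T)`
in the dominance order. -/
def ModEdge (n : ℕ) (lam : List ℕ) (T T' : List (List ℕ)) : Prop :=
  IsVertex n lam T ∧ IsVertex n lam T' ∧
  ∃ i j, 1 ≤ i ∧ i < j ∧ j ≤ n ∧
    IsPartitionFun n (contentMinus T i j) ∧
    DomCovers n (contentOf T) (contentMinus T i j) ∧
    fRoot i j T = some T'

/-- Two tableaux lie in the same connected component of `𝔹(λ)⁺` (undirected reachability). -/
def SameComp (n : ℕ) (lam : List ℕ) : List (List ℕ) → List (List ℕ) → Prop :=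
  Relation.ReflTransGen fun a b => ModEdge n lam a b ∨ ModEdge n lam b a

/-- `⟨μ - ν, ρ^∨⟩ = Σ_{j=1}^{n-1} Σ_{i=1}^{j} (μ_i - ν_i)`. -/
def pairingRho (n : ℕ) (μ ν : ℕ → ℕ) : ℕ :=
  ∑ j ∈ Finset.Icc 1 (n - 1), (sumTo μ j - sumTo ν j)

/-- `f_{α_1 + α_2} = s_2 ∘ f̃_1 ∘ s_2` (type `A_2`). -/
def fA12 (T : List (List ℕ)) : Option (List (List ℕ)) := (ftil 1 (siAct 2 T)).map (siAct 2)

/-- `f_2 = s_1 ∘ f_{α_1+α_2} ∘ s_1` (type `A_2`). -/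
def f2op (T : List (List ℕ)) : Option (List (List ℕ)) := (fA12 (siAct 1 T)).map (siAct 1)

/-- `e_{α_1 + α_2} = s_2 ∘ ẽ_1 ∘ s_2` (type `A_2`). -/
def eA12 (T : List (List ℕ)) : Option (List (List ℕ)) := (etil 1 (siAct 2 T)).map (siAct 2)

/-- `e_2 = s_1 ∘ e_{α_1+α_2} ∘ s_1` (type `A_2`). -/
def e2op (T : List (List ℕ)) : Option (List (List ℕ)) := (eA12 (siAct 1 T)).map (siAct 1)



/-! ### Auxiliary machinery for Statement 6 -/

def _root_.List.enum {α : Type} (l : List α) : List (ℕ × α) := l.zipIdx.map Prod.swap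

theorem _root_.List.mem_enum {α : Type} {x : α} {n : ℕ} {l : List α} (h : (n, x) ∈ l.enum) :
    ∃ h : n < l.length, l[n] = x := by
  unfold List.enum at h
  rw [List.mem_map] at h
  obtain ⟨⟨y, k⟩, hm, he⟩ := h
  simp only [Prod.swap_prod_mk, Prod.mk.injEq] at he
  obtain ⟨rfl, rfl⟩ := he
  have := List.mem_zipIdx hm
  simp only [Nat.zero_le, Nat.zero_add, Nat.sub_zero, true_and] at this
  obtain ⟨h1, h2⟩ := this
  exact ⟨h1, h2.symm⟩

theorem _root_.List.enum_map_fst {α : Type} (l : List α) :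
    l.enum.map Prod.fst = List.range l.length := by
  unfold List.enum
  rw [List.map_map]
  exact (List.zipIdx_map_snd 0 l).trans List.range_eq_range'.symm

theorem _root_.List.enum_map_snd {α : Type} (l : List α) :
    l.enum.map Prod.snd = l := by
  unfold List.enum
  rw [List.map_map]
  exact List.zipIdx_map_fst 0 l

lemma rowWordP_eq (T : List (List ℕ)) : rowWordP T =
    (T.enum.map fun p => ((p.2.enum.map fun q => (q.2, (p.1, q.1))).reverse)).flatten := rfl


def bstep (i : ℕ) (st : List (ℕ × ℕ) × List (ℕ × ℕ)) (p : ℕ × (ℕ × ℕ)) :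
    List (ℕ × ℕ) × List (ℕ × ℕ) :=
  if p.1 = i then (st.1, p.2 :: st.2)
  else if p.1 = i + 1 then
    match st.2 with
    | [] => (st.1 ++ [p.2], [])
    | _ :: tail => (st.1, tail)
  else st

lemma bracket_eq (i : ℕ) (w : List (ℕ × (ℕ × ℕ))) :
    bracket i w = w.foldl (bstep i) ([], []) := rfl

lemma bal (i : ℕ) : ∀ (w : List (ℕ × (ℕ × ℕ))) (st : List (ℕ × ℕ) × List (ℕ × ℕ)),
    (w.foldl (bstep i) st).1.length + st.2.length + (w.map Prod.fst).count i
      = (w.foldl (bstep i) st).2.length + st.1.length + (w.map Prod.fst).count (i+1)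
  | [], st => by simp; omega
  | p :: w, st => by
    obtain ⟨a, q⟩ := p
    rw [List.foldl_cons]
    by_cases h1 : a = i
    · have hb : bstep i st (a, q) = (st.1, q :: st.2) := by simp [bstep, h1]
      rw [hb]
      have IH := bal i w (st.1, q :: st.2)
      have h2 : ¬ a = i + 1 := by omega
      have hci : (((a, q) :: w).map Prod.fst).count i = (w.map Prod.fst).count i + 1 := by
        simp [List.count_cons, h1]
      have hcj : (((a, q) :: w).map Prod.fst).count (i+1) = (w.map Prod.fst).count (i+1) := by
        simp [List.count_cons, h2]
      rw [hci, hcj]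
      simp only [List.length_cons] at IH
      omega
    · by_cases h2 : a = i + 1
      · rcases hst : st.2 with _ | ⟨b, tl⟩
        · have hb : bstep i st (a, q) = (st.1 ++ [q], []) := by simp [bstep, h1, h2, hst]
          rw [hb]
          have IH := bal i w (st.1 ++ [q], [])
          have hci : (((a, q) :: w).map Prod.fst).count i = (w.map Prod.fst).count i := by
            simp [List.count_cons, h1]
          have hcj : (((a, q) :: w).map Prod.fst).count (i+1)
              = (w.map Prod.fst).count (i+1) + 1 := by
            simp [List.count_cons, h2]
          rw [hci, hcj]
          simp only [List.length_append, List.length_nil, List.length_cons] at IH ⊢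
          omega
        · have hb : bstep i st (a, q) = (st.1, tl) := by simp [bstep, h1, h2, hst]
          rw [hb]
          have IH := bal i w (st.1, tl)
          have hci : (((a, q) :: w).map Prod.fst).count i = (w.map Prod.fst).count i := by
            simp [List.count_cons, h1]
          have hcj : (((a, q) :: w).map Prod.fst).count (i+1)
              = (w.map Prod.fst).count (i+1) + 1 := by
            simp [List.count_cons, h2]
          rw [hci, hcj]
          simp only [List.length_cons] at IH ⊢
          omega
      · have hb : bstep i st (a, q) = st := by simp [bstep, h1, h2]
        rw [hb]
        have IH := bal i w st
        have hci : (((a, q) :: w).map Prod.fst).count i = (w.map Prod.fst).count i := by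
          simp [List.count_cons, h1]
        have hcj : (((a, q) :: w).map Prod.fst).count (i+1)
            = (w.map Prod.fst).count (i+1) := by
          simp [List.count_cons, h2]
        rw [hci, hcj]
        omega

lemma subl (i : ℕ) : ∀ (w : List (ℕ × (ℕ × ℕ))) (st : List (ℕ × ℕ) × List (ℕ × ℕ))
    (L : List (ℕ × ℕ)), (st.1 ++ st.2.reverse).Sublist L →
    ((w.foldl (bstep i) st).1 ++ (w.foldl (bstep i) st).2.reverse).Sublist
      (L ++ w.map Prod.snd)
  | [], st, L, h => by simpa using h
  | p :: w, st, L, h => by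
    obtain ⟨a, q⟩ := p
    have key : ((bstep i st (a, q)).1 ++ (bstep i st (a, q)).2.reverse).Sublist (L ++ [q]) := by
      by_cases h1 : a = i
      · have hb : bstep i st (a, q) = (st.1, q :: st.2) := by simp [bstep, h1]
        rw [hb]
        simpa [← List.append_assoc] using h.append (List.Sublist.refl [q])
      · by_cases h2 : a = i + 1
        · rcases hst : st.2 with _ | ⟨b, tl⟩
          · have hb : bstep i st (a, q) = (st.1 ++ [q], []) := by simp [bstep, h1, h2, hst]
            rw [hb]
            have h' : st.1.Sublist L := by simpa [hst] using h
            simpa using h'.append (List.Sublist.refl [q])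
          · have hb : bstep i st (a, q) = (st.1, tl) := by simp [bstep, h1, h2, hst]
            rw [hb]
            have h' : (st.1 ++ tl.reverse).Sublist (st.1 ++ st.2.reverse) := by
              rw [hst]
              refine List.Sublist.append (List.Sublist.refl _) ?_
              simp
            exact (h'.trans h).trans (List.sublist_append_left _ _)
        · have hb : bstep i st (a, q) = st := by simp [bstep, h1, h2]
          rw [hb]
          exact h.trans (List.sublist_append_left _ _)
    have IH := subl i w (bstep i st (a, q)) (L ++ [q]) key
    rw [List.foldl_cons]
    simpa [List.append_assoc] using IH

lemma memB (i : ℕ) : ∀ (w : List (ℕ × (ℕ × ℕ))) (st : List (ℕ × ℕ) × List (ℕ × ℕ))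
    (rc : ℕ × ℕ), rc ∈ (w.foldl (bstep i) st).2 → rc ∈ st.2 ∨ (i, rc) ∈ w
  | [], st, rc, h => Or.inl h
  | p :: w, st, rc, h => by
    obtain ⟨a, q⟩ := p
    rw [List.foldl_cons] at h
    have IH := memB i w (bstep i st (a, q)) rc h
    rcases IH with hm | hm
    · by_cases h1 : a = i
      · have hb : bstep i st (a, q) = (st.1, q :: st.2) := by simp [bstep, h1]
        rw [hb] at hm
        rcases List.mem_cons.1 hm with he | he
        · right
          rw [h1.symm, he.symm] at *
          exact List.mem_cons_self
        · exact Or.inl he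
      · by_cases h2 : a = i + 1
        · rcases hst : st.2 with _ | ⟨b, tl⟩
          · have hb : bstep i st (a, q) = (st.1 ++ [q], []) := by simp [bstep, h1, h2, hst]
            rw [hb] at hm; simp at hm
          · have hb : bstep i st (a, q) = (st.1, tl) := by simp [bstep, h1, h2, hst]
            rw [hb] at hm
            exact Or.inl (List.mem_cons_of_mem _ hm)
        · have hb : bstep i st (a, q) = st := by simp [bstep, h1, h2]
          rw [hb] at hm; exact Or.inl hm
    · exact Or.inr (List.mem_cons_of_mem _ hm)

lemma memA (i : ℕ) : ∀ (w : List (ℕ × (ℕ × ℕ))) (st : List (ℕ × ℕ) × List (ℕ × ℕ))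
    (rc : ℕ × ℕ), rc ∈ (w.foldl (bstep i) st).1 → rc ∈ st.1 ∨ (i + 1, rc) ∈ w
  | [], st, rc, h => Or.inl h
  | p :: w, st, rc, h => by
    obtain ⟨a, q⟩ := p
    rw [List.foldl_cons] at h
    have IH := memA i w (bstep i st (a, q)) rc h
    rcases IH with hm | hm
    · by_cases h1 : a = i
      · have hb : bstep i st (a, q) = (st.1, q :: st.2) := by simp [bstep, h1]
        rw [hb] at hm; exact Or.inl hm
      · by_cases h2 : a = i + 1
        · rcases hst : st.2 with _ | ⟨b, tl⟩
          · have hb : bstep i st (a, q) = (st.1 ++ [q], []) := by simp [bstep, h1, h2, hst]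
            rw [hb] at hm
            rcases List.mem_append.1 hm with he | he
            · exact Or.inl he
            · right
              simp only [List.mem_singleton] at he
              rw [h2.symm, he.symm] at *
              exact List.mem_cons_self
          · have hb : bstep i st (a, q) = (st.1, tl) := by simp [bstep, h1, h2, hst]
            rw [hb] at hm; exact Or.inl hm
        · have hb : bstep i st (a, q) = st := by simp [bstep, h1, h2]
          rw [hb] at hm; exact Or.inl hm
    · exact Or.inr (List.mem_cons_of_mem _ hm)

def entryAt (T : List (List ℕ)) (rc : ℕ × ℕ) : ℕ := (T.getD rc.1 []).getD rc.2 0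

lemma sum_set_add (l : List ℕ) (n : ℕ) (h : n < l.length) (x : ℕ) :
    (l.set n x).sum + l[n] = l.sum + x := by
  have h2 : l.sum = (l.take n).sum + (l[n] + (l.drop (n+1)).sum) := by
    conv_lhs => rw [← List.take_append_drop n l, List.drop_eq_getElem_cons h]
    rw [List.sum_append, List.sum_cons]
  rw [List.set_eq_take_append_cons_drop, if_pos h]
  simp only [List.sum_append, List.sum_cons]
  omega

lemma count_set_add (l : List ℕ) (c : ℕ) (h : c < l.length) (v a : ℕ) :
    (l.set c v).count a + (if l[c] = a then 1 else 0)
      = l.count a + (if v = a then 1 else 0) := by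
  have h2 : l.count a = (l.take c).count a
      + ((if l[c] = a then 1 else 0) + (l.drop (c+1)).count a) := by
    conv_lhs => rw [← List.take_append_drop c l, List.drop_eq_getElem_cons h]
    simp only [List.count_append, List.count_cons, beq_iff_eq]
    split_ifs <;> omega
  rw [List.set_eq_take_append_cons_drop, if_pos h]
  simp only [List.count_append, List.count_cons, beq_iff_eq]
  rw [h2]
  split_ifs <;> omega

lemma setCell_count (T : List (List ℕ)) (rc : ℕ × ℕ) (v a : ℕ)
    (h1 : rc.1 < T.length) (h2 : rc.2 < (T.getD rc.1 []).length) :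
    (setCell T rc v).flatten.count a + (if entryAt T rc = a then 1 else 0)
      = T.flatten.count a + (if v = a then 1 else 0) := by
  have hrow : T.getD rc.1 [] = T[rc.1] := List.getD_eq_getElem _ _ h1
  have hEntry : entryAt T rc = (T.getD rc.1 [])[rc.2] := by
    unfold entryAt
    exact List.getD_eq_getElem _ _ h2
  rw [List.count_flatten, List.count_flatten]
  unfold setCell
  rw [List.map_set]
  have hlen : rc.1 < (T.map (List.count a)).length := by simpa using h1
  have e1 := sum_set_add (T.map (List.count a)) rc.1 hlen
    (List.count a ((T.getD rc.1 []).set rc.2 v))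
  have e2 : (T.map (List.count a))[rc.1] = List.count a (T.getD rc.1 []) := by
    rw [List.getElem_map, hrow]
  rw [e2] at e1
  have e3 := count_set_add (T.getD rc.1 []) rc.2 h2 v a
  rw [← hEntry] at e3
  split_ifs at e3 ⊢ <;> omega

lemma setCell_length (T : List (List ℕ)) (rc : ℕ × ℕ) (v : ℕ) :
    (setCell T rc v).length = T.length := by simp [setCell]

lemma setCell_getD_ne (T : List (List ℕ)) (rc : ℕ × ℕ) (v : ℕ) (r : ℕ) (h : r ≠ rc.1) :
    (setCell T rc v).getD r [] = T.getD r [] := by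
  unfold setCell
  simp only [List.getD_eq_getElem?_getD]
  rw [List.getElem?_set_ne (Ne.symm h)]

lemma setCell_rowlen (T : List (List ℕ)) (rc : ℕ × ℕ) (v : ℕ) (r : ℕ) :
    ((setCell T rc v).getD r []).length = (T.getD r []).length := by
  by_cases h : r = rc.1
  · subst h
    by_cases h1 : rc.1 < T.length
    · unfold setCell
      rw [List.getD_eq_getElem?_getD, List.getElem?_set_self (by simpa using h1)]
      simp
    · unfold setCell
      rw [List.set_eq_of_length_le (by omega)]
  · rw [setCell_getD_ne T rc v r h]

lemma setCell_entry_ne (T : List (List ℕ)) (rc : ℕ × ℕ) (v : ℕ) (rc' : ℕ × ℕ)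
    (h : rc' ≠ rc) : entryAt (setCell T rc v) rc' = entryAt T rc' := by
  by_cases hr : rc'.1 = rc.1
  · have hc : rc'.2 ≠ rc.2 := fun hc => h (Prod.ext hr hc)
    by_cases h1 : rc.1 < T.length
    · unfold entryAt setCell
      rw [hr, List.getD_eq_getElem?_getD (l := T.set rc.1 _),
        List.getElem?_set_self (by simpa using h1)]
      simp only [Option.getD_some, List.getD_eq_getElem?_getD]
      rw [List.getElem?_set_ne (Ne.symm hc)]
    · unfold entryAt setCell
      rw [List.set_eq_of_length_le (by omega)]
  · unfold entryAt
    rw [setCell_getD_ne T rc v rc'.1 hr]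

/-- fold of setCell on distinct valid cells all holding `u`, set to `v`. -/
lemma fold_set_count (v u : ℕ) : ∀ (L : List (ℕ × ℕ)) (T : List (List ℕ)),
    L.Nodup →
    (∀ rc ∈ L, rc.1 < T.length ∧ rc.2 < (T.getD rc.1 []).length ∧ entryAt T rc = u) →
    ∀ a, (L.foldl (fun U rc => setCell U rc v) T).flatten.count a
        + (if u = a then L.length else 0)
      = T.flatten.count a + (if v = a then L.length else 0)
  | [], T, _, _, a => by simp
  | rc :: L, T, hnd, hval, a => by
    rw [List.foldl_cons]
    obtain ⟨hv1, hv2, hv3⟩ := hval rc (List.mem_cons_self)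
    have hstep := setCell_count T rc v a hv1 hv2
    rw [hv3] at hstep
    have hval' : ∀ rc' ∈ L, rc'.1 < (setCell T rc v).length ∧
        rc'.2 < ((setCell T rc v).getD rc'.1 []).length ∧
        entryAt (setCell T rc v) rc' = u := by
      intro rc' hrc'
      obtain ⟨g1, g2, g3⟩ := hval rc' (List.mem_cons_of_mem _ hrc')
      have hne : rc' ≠ rc := by
        rintro rfl
        exact (List.nodup_cons.1 hnd).1 hrc'
      refine ⟨by rwa [setCell_length], by rwa [setCell_rowlen], ?_⟩
      rw [setCell_entry_ne T rc v rc' hne, g3]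
    have IH := fold_set_count v u L (setCell T rc v) (List.nodup_cons.1 hnd).2 hval' a
    simp only [List.length_cons]
    split_ifs at IH hstep ⊢ <;> omega


lemma rowWordP_mem (T : List (List ℕ)) (p : ℕ × (ℕ × ℕ)) (h : p ∈ rowWordP T) :
    p.2.1 < T.length ∧ p.2.2 < (T.getD p.2.1 []).length ∧ entryAt T p.2 = p.1 := by
  rw [rowWordP_eq] at h
  rw [List.mem_flatten] at h
  obtain ⟨l, hl, hpl⟩ := h
  rw [List.mem_map] at hl
  obtain ⟨pr, hpr, rfl⟩ := hl
  rw [List.mem_reverse, List.mem_map] at hpl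
  obtain ⟨q, hq, rfl⟩ := hpl
  obtain ⟨r, row⟩ := pr
  obtain ⟨c, x⟩ := q
  obtain ⟨hr, hrow⟩ := List.mem_enum hpr
  obtain ⟨hc, hx⟩ := List.mem_enum hq
  have hgd : T.getD r [] = row := by rw [List.getD_eq_getElem _ _ hr, ← hrow]
  refine ⟨hr, ?_, ?_⟩
  · show c < (T.getD r []).length
    rw [hgd]; exact hc
  · show (T.getD r []).getD c 0 = x
    rw [hgd, List.getD_eq_getElem _ _ hc, ← hx]

lemma rowWordP_snd_nodup (T : List (List ℕ)) : ((rowWordP T).map Prod.snd).Nodup := by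
  rw [rowWordP_eq]
  rw [List.map_flatten, List.map_map]
  have hfun : (List.map Prod.snd ∘ fun p : ℕ × List ℕ =>
        ((p.2.enum.map fun q => (q.2, (p.1, q.1))).reverse))
      = fun p : ℕ × List ℕ => (p.2.enum.map fun q => (p.1, q.1)).reverse := by
    funext p
    simp only [Function.comp_apply, List.map_reverse, List.map_map]
    rfl
  rw [hfun, List.nodup_flatten]
  constructor
  · intro l hl
    rw [List.mem_map] at hl
    obtain ⟨p, _, rfl⟩ := hl
    rw [List.nodup_reverse]
    have : (p.2.enum.map fun q : ℕ × ℕ => ((p.1 : ℕ), q.1))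
        = (p.2.enum.map Prod.fst).map fun c => (p.1, c) := by
      rw [List.map_map]; rfl
    rw [this, List.enum_map_fst]
    exact (List.nodup_range (n := _)).map (fun c c' hcc => by
      simpa using congrArg Prod.snd hcc)
  · rw [List.pairwise_map]
    have hnd : (T.enum.map Prod.fst).Nodup := by
      rw [List.enum_map_fst]; exact List.nodup_range
    rw [List.Nodup, List.pairwise_map] at hnd
    refine hnd.imp ?_
    intro p p' hne
    rw [List.disjoint_left]
    intro x hx hx'
    rw [List.mem_reverse, List.mem_map] at hx hx'
    obtain ⟨q, _, rfl⟩ := hx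
    obtain ⟨q', _, he⟩ := hx'
    exact hne (by simpa using (congrArg Prod.fst he).symm)

lemma rowWordP_fst_count (T : List (List ℕ)) (a : ℕ) :
    ((rowWordP T).map Prod.fst).count a = T.flatten.count a := by
  rw [rowWordP_eq]
  rw [List.map_flatten, List.map_map]
  have hfun : (List.map Prod.fst ∘ fun p : ℕ × List ℕ =>
        ((p.2.enum.map fun q => (q.2, (p.1, q.1))).reverse))
      = fun p : ℕ × List ℕ => p.2.reverse := by
    funext p
    simp only [Function.comp_apply, List.map_reverse, List.map_map]
    have : (Prod.fst ∘ fun q : ℕ × ℕ => ((q.2 : ℕ), (p.1, q.1))) = Prod.snd := rfl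
    rw [this, List.enum_map_snd]
  rw [hfun]
  have : T.enum.map (fun p : ℕ × List ℕ => p.2.reverse)
      = T.map List.reverse := by
    have h1 : (fun p : ℕ × List ℕ => p.2.reverse) = List.reverse ∘ Prod.snd := rfl
    rw [h1, ← List.map_map, List.enum_map_snd]
  rw [this, List.count_flatten, List.count_flatten, List.map_map]
  congr 1
  exact List.map_congr_left fun row _ => List.count_reverse (a := a) (l := row)

def swapF (k a : ℕ) : ℕ := if a = k then k + 1 else if a = k + 1 then k else a

lemma contentOf_siAct (k : ℕ) (T : List (List ℕ)) (a : ℕ) :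
    contentOf (siAct k T) a = contentOf T (swapF k a) := by
  have hsub := subl k (rowWordP T) ([], []) [] (by simp)
  rw [← bracket_eq] at hsub
  simp only [List.nil_append] at hsub
  have hnd : ((bracket k (rowWordP T)).1 ++ (bracket k (rowWordP T)).2.reverse).Nodup :=
    hsub.nodup (rowWordP_snd_nodup T)
  have hbal := bal k (rowWordP T) ([], [])
  rw [← bracket_eq] at hbal
  simp only [List.length_nil, Nat.add_zero] at hbal
  rw [rowWordP_fst_count, rowWordP_fst_count] at hbal
  simp only [siAct, contentOf]
  split_ifs with hlt
  · -- set the last r - s unmatched (k+1)'s to k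
    have hLnd : ((bracket k (rowWordP T)).1.drop (bracket k (rowWordP T)).2.length).Nodup :=
      ((List.drop_sublist _ _).trans (List.sublist_append_left _ _)).nodup hnd
    have hval : ∀ rc ∈ (bracket k (rowWordP T)).1.drop (bracket k (rowWordP T)).2.length,
        rc.1 < T.length ∧ rc.2 < (T.getD rc.1 []).length ∧ entryAt T rc = k + 1 := by
      intro rc hrc
      have h1 : rc ∈ (bracket k (rowWordP T)).1 := List.drop_subset _ _ hrc
      have h2 := memA k (rowWordP T) ([], []) rc (by rw [← bracket_eq]; exact h1)
      simp only [List.not_mem_nil, false_or] at h2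
      exact rowWordP_mem T (k + 1, rc) h2
    have hfold := fold_set_count k (k + 1)
      ((bracket k (rowWordP T)).1.drop (bracket k (rowWordP T)).2.length) T hLnd hval a
    rw [List.length_drop] at hfold
    rcases eq_or_ne a k with hk | hak
    · rw [hk] at hfold ⊢
      rw [show swapF k k = k + 1 from by simp [swapF]]
      split_ifs at hfold <;> omega
    · rcases eq_or_ne a (k + 1) with hk1 | hak1
      · rw [hk1] at hfold ⊢
        rw [show swapF k (k + 1) = k from by simp [swapF]]
        split_ifs at hfold <;> omega
      · rw [show swapF k a = a from by simp [swapF, hak, hak1]]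
        split_ifs at hfold <;> omega
  · have hnd2 : (bracket k (rowWordP T)).2.Nodup := by
      have := hnd.of_append_right
      rwa [List.nodup_reverse] at this
    have hLnd : ((bracket k (rowWordP T)).2.drop (bracket k (rowWordP T)).1.length).Nodup :=
      (List.drop_sublist _ _).nodup hnd2
    have hval : ∀ rc ∈ (bracket k (rowWordP T)).2.drop (bracket k (rowWordP T)).1.length,
        rc.1 < T.length ∧ rc.2 < (T.getD rc.1 []).length ∧ entryAt T rc = k := by
      intro rc hrc
      have h1 : rc ∈ (bracket k (rowWordP T)).2 := List.drop_subset _ _ hrc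
      have h2 := memB k (rowWordP T) ([], []) rc (by rw [← bracket_eq]; exact h1)
      simp only [List.not_mem_nil, false_or] at h2
      exact rowWordP_mem T (k, rc) h2
    have hfold := fold_set_count (k + 1) k
      ((bracket k (rowWordP T)).2.drop (bracket k (rowWordP T)).1.length) T hLnd hval a
    rw [List.length_drop] at hfold
    rcases eq_or_ne a k with hk | hak
    · rw [hk] at hfold ⊢
      rw [show swapF k k = k + 1 from by simp [swapF]]
      split_ifs at hfold <;> omega
    · rcases eq_or_ne a (k + 1) with hk1 | hak1
      · rw [hk1] at hfold ⊢
        rw [show swapF k (k + 1) = k from by simp [swapF]]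
        split_ifs at hfold <;> omega
      · rw [show swapF k a = a from by simp [swapF, hak, hak1]]
        split_ifs at hfold <;> omega

lemma contentOf_applyWord : ∀ (l : List ℕ) (T : List (List ℕ)) (a : ℕ),
    contentOf (applyWord l T) a = contentOf T (l.foldr swapF a)
  | [], _, _ => rfl
  | k :: l, T, a => by
    rw [show applyWord (k :: l) T = applyWord l (siAct k T) from rfl,
      contentOf_applyWord l (siAct k T) a, List.foldr_cons]
    exact contentOf_siAct k T _

lemma foldl_swap_range_self : ∀ (cnt m : ℕ),
    List.foldl (fun a k => swapF k a) m (List.range' m cnt) = m + cnt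
  | 0, m => by simp
  | cnt + 1, m => by
    rw [List.range'_succ, List.foldl_cons]
    have h1 : swapF m m = m + 1 := by simp [swapF]
    rw [h1, foldl_swap_range_self cnt (m + 1)]
    omega

lemma foldl_swap_range_lt : ∀ (cnt m a : ℕ), a < m →
    List.foldl (fun a k => swapF k a) a (List.range' m cnt) = a
  | 0, _, _, _ => by simp
  | cnt + 1, m, a, h => by
    rw [List.range'_succ, List.foldl_cons]
    have h1 : swapF m a = a := by
      unfold swapF; rw [if_neg (by omega), if_neg (by omega)]
    rw [h1]
    exact foldl_swap_range_lt cnt (m + 1) a (by omega)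

lemma foldl_swap_range_gt : ∀ (cnt m a : ℕ), m + cnt < a →
    List.foldl (fun a k => swapF k a) a (List.range' m cnt) = a
  | 0, _, _, _ => by simp
  | cnt + 1, m, a, h => by
    rw [List.range'_succ, List.foldl_cons]
    have h1 : swapF m a = a := by
      unfold swapF; rw [if_neg (by omega), if_neg (by omega)]
    rw [h1]
    exact foldl_swap_range_gt cnt (m + 1) a (by omega)

lemma key_content (i j : ℕ) (hi : 1 ≤ i) (hij : i < j) (T : List (List ℕ)) :
    contentOf (applyWord (wWord i j).reverse T) 1 = contentOf T i ∧
    contentOf (applyWord (wWord i j).reverse T) 2 = contentOf T j := by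
  have hfold : ∀ a : ℕ, ((wWord i j).reverse).foldr swapF a
      = List.foldl (fun a k => swapF k a)
          (List.foldl (fun a k => swapF k a) a (List.range' 2 (j - 2)))
          (List.range' 1 (i - 1)) := by
    intro a
    rw [List.foldr_reverse, wWord, List.foldl_append]
  constructor <;> rw [contentOf_applyWord, hfold]
  · rw [foldl_swap_range_lt (j - 2) 2 1 (by omega), foldl_swap_range_self]
    congr 1
    omega
  · rw [foldl_swap_range_self (j - 2) 2]
    rw [foldl_swap_range_gt (i - 1) 1 (2 + (j - 2)) (by omega)]
    congr 1
    omega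

lemma isSome_map' {α β : Type} (g : α → β) (o : Option α) :
    (o.map g).isSome = o.isSome := by cases o <;> rfl

/-- Let `T` be an SSYT of shape `λ` with content `μ`, and `α = ε_i - ε_j`
(`i < j`) a type `A_{n-1}` positive root. (1) If `μ_i > μ_j` then `f_α(T) ≠ 0`; in particular,
if `μ - α` is a partition then `f_α(T) ≠ 0`. (2) If `μ_i < μ_j` then `e_α(T) ≠ 0`. -/
theorem statement6 (n : ℕ) (hn : 2 ≤ n) (lam : List ℕ)
    (T : List (List ℕ)) (hT : IsSSYT n T) (hshape : T.map List.length = lam)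
    (i j : ℕ) (hi : 1 ≤ i) (hij : i < j) (hj : j ≤ n) :
    ((contentOf T j < contentOf T i → (fRoot i j T).isSome) ∧
      (IsPartitionFun n (contentMinus T i j) → (fRoot i j T).isSome)) ∧
    (contentOf T i < contentOf T j → (eRoot i j T).isSome) := by
  have hc := key_content i j hi hij T
  simp only [contentOf] at hc
  obtain ⟨c1, c2⟩ := hc
  have hbal := bal 1 (rowWordP (applyWord (wWord i j).reverse T)) ([], [])
  rw [← bracket_eq] at hbal
  simp only [List.length_nil, Nat.add_zero] at hbal
  rw [rowWordP_fst_count, rowWordP_fst_count] at hbal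
  have h12 : (1 + 1 : ℕ) = 2 := rfl
  rw [h12] at hbal
  simp only [contentOf]
  have main : T.flatten.count j < T.flatten.count i → (fRoot i j T).isSome = true := by
    intro hlt
    have hne : (bracket 1 (rowWordP (applyWord (wWord i j).reverse T))).2 ≠ [] := by
      intro hnil
      rw [hnil] at hbal
      simp only [List.length_nil] at hbal
      omega
    rcases hgl : (bracket 1 (rowWordP (applyWord (wWord i j).reverse T))).2.getLast?
      with _ | x
    · exact absurd (List.getLast?_isSome.2 hne) (by rw [hgl]; simp)
    · unfold fRoot ftil
      rw [hgl]
      rw [isSome_map']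
      rfl
  refine ⟨⟨main, ?_⟩, ?_⟩
  · intro hpart
    apply main
    obtain ⟨hmono, _⟩ := hpart
    have h := hmono i j hi (le_of_lt hij)
    simp only [contentMinus, contentOf] at h
    split_ifs at h <;> omega
  · intro hlt
    have hne : (bracket 1 (rowWordP (applyWord (wWord i j).reverse T))).1 ≠ [] := by
      intro hnil
      rw [hnil] at hbal
      simp only [List.length_nil] at hbal
      omega
    rcases hgl : (bracket 1 (rowWordP (applyWord (wWord i j).reverse T))).1.getLast?
      with _ | x
    · exact absurd (List.getLast?_isSome.2 hne) (by rw [hgl]; simp)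
    · unfold eRoot etil
      rw [hgl]
      rw [isSome_map']
      rfl


end AtomicPaper
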